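/- Suppose the standing assumptions hold (x_1,…,x_n i.i.d. from q0 with q0 ∈ Q^adm_{q0}(𝒳), every p_θ ∈ Q^adm_{q0}(𝒳), and the PMF estimate q̂_α ∈ Q^adm_{q0}(𝒳) almost surely), together with Assumption A2, Assumption A3, and Assumption A4(r) for r = 1. Then sup_{θ∈Θ} |L̂_n(θ) − L(θ)| → 0 almost surely as n → ∞. -/

import Mathlib

/-!
The empirical loss differs from the oracle loss, in which `q̂_α` is replaced by `q0`, by at most
the sample mean of `2 K₀(xᵢ) ∑_{x' ∈ M(xᵢ)} |log(q̂_α(x')/q̂_α(xᵢ)) - log(q0(x')/q0(xᵢ))|`, a bound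
that does not depend on `θ`. By the strong law `q̂_α → q0` pointwise, so these weights vanish at
every support point, while finiteness of `𝒳` or the polynomial growth bounds together with the
subexponential tails of `q0` make the contribution of the points outside a large finite set small.
The oracle loss is a sample mean of functions of `θ` that are Lipschitz with an integrable
constant (mean value theorem with the envelope `K₁`); the strong law on a countable dense subset
of the totally bounded set `Θ` then upgrades to uniform convergence on `Θ`.
-/

open MeasureTheory Filter Topology ProbabilityTheory

noncomputable section

def sampleMean (u : ℕ → ℝ) (n : ℕ) : ℝ := (∑ i ∈ Finset.range n, u i) / n

section SampleMean

variable {u v w : ℕ → ℝ} {n : ℕ}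

theorem sampleMean_nonneg (h : ∀ i, 0 ≤ u i) : 0 ≤ sampleMean u n :=
  div_nonneg (Finset.sum_nonneg fun i _ => h i) n.cast_nonneg

theorem sampleMean_le_sampleMean (h : ∀ i, u i ≤ v i) : sampleMean u n ≤ sampleMean v n :=
  div_le_div_of_nonneg_right (Finset.sum_le_sum fun i _ => h i) n.cast_nonneg

theorem sampleMean_le_of_le {c : ℝ} (hc : 0 ≤ c) (h : ∀ i, u i ≤ c) : sampleMean u n ≤ c := by
  rcases n.eq_zero_or_pos with rfl | hn
  · simpa [sampleMean] using hc
  rw [sampleMean, div_le_iff₀ (by positivity)]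
  calc ∑ i ∈ Finset.range n, u i ≤ ∑ _i ∈ Finset.range n, c := Finset.sum_le_sum fun i _ => h i
    _ = c * n := by simp [mul_comm]

theorem sampleMean_add : sampleMean (u + v) n = sampleMean u n + sampleMean v n := by
  simp [sampleMean, Finset.sum_add_distrib, add_div]

theorem sampleMean_mul_left (c : ℝ) : sampleMean (fun i => c * u i) n = c * sampleMean u n := by
  simp [sampleMean, ← Finset.mul_sum, mul_div_assoc]

theorem sampleMean_mul_right (c : ℝ) : sampleMean (fun i => u i * c) n = sampleMean u n * c := by
  simp [sampleMean, ← Finset.sum_mul, div_mul_eq_mul_div]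

theorem dist_sampleMean_le (h : ∀ i, |u i - v i| ≤ w i) :
    dist (sampleMean u n) (sampleMean v n) ≤ sampleMean w n := by
  rw [Real.dist_eq, sampleMean, sampleMean, ← sub_div, ← Finset.sum_sub_distrib, abs_div,
    Nat.abs_cast]
  exact div_le_div_of_nonneg_right
    ((Finset.abs_sum_le_sum_abs _ _).trans (Finset.sum_le_sum fun i _ => h i)) n.cast_nonneg

end SampleMean

theorem tendsto_add_div_add_of_tendsto_div {u : ℕ → ℝ} {L : ℝ} (a b : ℝ)
    (h : Tendsto (fun n : ℕ => u n / n) atTop (𝓝 L)) :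
    Tendsto (fun n : ℕ => (u n + a) / (n + b)) atTop (𝓝 L) := by
  have hlim : Tendsto (fun n : ℕ => (u n / n + a / n) / (1 + b / n)) atTop
      (𝓝 ((L + 0) / (1 + 0))) :=
    (h.add (tendsto_const_div_atTop_nhds_zero_nat a)).div
      (tendsto_const_nhds.add (tendsto_const_div_atTop_nhds_zero_nat b)) (by norm_num)
  rw [add_zero, add_zero, div_one] at hlim
  refine hlim.congr' ((eventually_ne_atTop 0).mono fun n hn => ?_)
  have hn' : (n : ℝ) ≠ 0 := Nat.cast_ne_zero.2 hn
  rw [← add_div, one_add_div hn', div_div_div_cancel_right₀ hn']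

theorem tendsto_sampleMean_zero_of_tail {𝒳 : Type*} [DecidableEq 𝒳] {a : ℕ → 𝒳} {v : ℕ → 𝒳 → ℝ}
    (hv : ∀ n x, 0 ≤ v n x) (hpt : ∀ i, Tendsto (fun n => v n (a i)) atTop (𝓝 0))
    (htail : ∀ ε > 0, ∃ F : Finset 𝒳, ∀ᶠ n in atTop,
      sampleMean (fun i => if a i ∈ F then 0 else v n (a i)) n < ε) :
    Tendsto (fun n => sampleMean (fun i => v n (a i)) n) atTop (𝓝 0) := by
  classical
  refine tendsto_order.2 ⟨fun b hb => Eventually.of_forall fun n =>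
    hb.trans_le (sampleMean_nonneg fun i => hv n _), fun ε hε => ?_⟩
  obtain ⟨F, hF⟩ := htail (ε / 2) (half_pos hε)
  set F' := F.filter (· ∈ Set.range a)
  have hhead : Tendsto (fun n => ∑ x ∈ F', v n x) atTop (𝓝 0) := by
    simpa using tendsto_finsetSum (f := fun x n => v n x) (a := fun _ => 0) F' fun x hx => by
      obtain ⟨i, rfl⟩ := (Finset.mem_filter.1 hx).2
      exact hpt i
  filter_upwards [hF, hhead.eventually_lt_const (half_pos hε)] with n htail_n hhead_n
  have hsplit : (fun i => v n (a i)) = (fun i => if a i ∈ F then v n (a i) else 0) +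
      fun i => if a i ∈ F then 0 else v n (a i) := by
    funext i
    simp only [Pi.add_apply]
    split_ifs <;> simp
  have hhead_le : sampleMean (fun i => if a i ∈ F then v n (a i) else 0) n ≤ ∑ x ∈ F', v n x :=
    sampleMean_le_of_le (Finset.sum_nonneg fun x _ => hv n x) fun i => by
      split_ifs with hi
      · exact Finset.single_le_sum (fun x _ => hv n x) (Finset.mem_filter.2 ⟨hi, i, rfl⟩)
      · exact Finset.sum_nonneg fun x _ => hv n x
  rw [hsplit, sampleMean_add]
  linarith

theorem exists_finset_sampleMean_ite_lt_of_finite {𝒳 : Type*} [DecidableEq 𝒳] [Finite 𝒳] (a : ℕ → 𝒳)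
    (v : ℕ → 𝒳 → ℝ) : ∀ ε > 0, ∃ F : Finset 𝒳, ∀ᶠ n in atTop,
      sampleMean (fun i => if a i ∈ F then 0 else v n (a i)) n < ε := by
  have := Fintype.ofFinite 𝒳
  exact fun ε hε => ⟨Finset.univ, Eventually.of_forall fun n => by simpa [sampleMean] using hε⟩

theorem exists_finset_sampleMean_ite_lt_of_le {𝒳 : Type*} [DecidableEq 𝒳] {a : ℕ → 𝒳}
    {v : ℕ → 𝒳 → ℝ} {ψ : 𝒳 → ℝ} {C : ℝ} (hψ0 : ∀ x, 0 ≤ ψ x)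
    (hvψ : ∀ᶠ n in atTop, ∀ x, v n x ≤ C * ψ x)
    (hψ : ∀ ε > 0, ∃ F : Finset 𝒳, ∀ᶠ n in atTop,
      sampleMean (fun i => if a i ∈ F then 0 else ψ (a i)) n < ε) :
    ∀ ε > 0, ∃ F : Finset 𝒳, ∀ᶠ n in atTop,
      sampleMean (fun i => if a i ∈ F then 0 else v n (a i)) n < ε := by
  intro ε hε
  obtain ⟨F, hF⟩ := hψ (ε / (|C| + 1)) (by positivity)
  refine ⟨F, ?_⟩
  filter_upwards [hvψ, hF] with n hvn hFn
  have hmean_nonneg : 0 ≤ sampleMean (fun i => if a i ∈ F then 0 else ψ (a i)) n :=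
    sampleMean_nonneg fun i => by split_ifs <;> simp [hψ0]
  calc sampleMean (fun i => if a i ∈ F then 0 else v n (a i)) n
      ≤ sampleMean (fun i => |C| * if a i ∈ F then 0 else ψ (a i)) n :=
        sampleMean_le_sampleMean fun i => by
          split_ifs
          · simp
          · exact (hvn _).trans (mul_le_mul_of_nonneg_right (le_abs_self C) (hψ0 _))
    _ = |C| * sampleMean (fun i => if a i ∈ F then 0 else ψ (a i)) n := sampleMean_mul_left _
    _ ≤ (|C| + 1) * sampleMean (fun i => if a i ∈ F then 0 else ψ (a i)) n := by
        gcongr; linarith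
    _ < (|C| + 1) * (ε / (|C| + 1)) := by gcongr
    _ = ε := by field_simp

theorem tendstoUniformlyOn_of_lipschitzOnWith_of_tendsto_dense {E β ι : Type*}
    [PseudoMetricSpace E] [PseudoMetricSpace β] {l : Filter ι} {Θ D : Set E}
    (hΘ : TotallyBounded Θ) (hDΘ : D ⊆ Θ) (hD : Θ ⊆ closure D) {F : ι → E → β} {f : E → β}
    {C : NNReal} (hF : ∀ᶠ n in l, LipschitzOnWith C (F n) Θ) (hf : LipschitzOnWith C f Θ)
    (hlim : ∀ θ ∈ D, Tendsto (fun n => F n θ) l (𝓝 (f θ))) :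
    TendstoUniformlyOn F f l Θ := by
  rw [Metric.tendstoUniformlyOn_iff]
  intro ε hε
  set δ : ℝ := ε / (6 * (C + 1)) with hδ_def
  have hδ : 0 < δ := by positivity
  have hCδ : (C : ℝ) * δ ≤ ε / 6 := by
    calc (C : ℝ) * δ = ε / 6 * (C / (C + 1)) := by rw [hδ_def]; field_simp
      _ ≤ ε / 6 * 1 := by gcongr; exact div_le_one_of_le₀ (by linarith) (by positivity)
      _ = ε / 6 := mul_one _
  obtain ⟨t, htD, ht, hcover⟩ := Metric.finite_approx_of_totallyBounded (hΘ.subset hDΘ) δ hδ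
  have hnear : ∀ θ ∈ Θ, ∃ y ∈ t, dist θ y < 2 * δ := by
    intro θ hθ
    obtain ⟨z, hzD, hθz⟩ := Metric.mem_closure_iff.1 (hD hθ) δ hδ
    obtain ⟨y, hyt, hzy⟩ := Set.mem_iUnion₂.1 (hcover hzD)
    exact ⟨y, hyt, by linarith [dist_triangle θ z y, Metric.mem_ball.1 hzy]⟩
  have hclose : ∀ᶠ n in l, ∀ y ∈ t, dist (F n y) (f y) < ε / 3 :=
    (ht.eventually_all).2 fun y hy => Metric.tendsto_nhds.1 (hlim y (htD hy)) _ (by positivity)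
  filter_upwards [hF, hclose] with n hFn hclose_n θ hθ
  obtain ⟨y, hyt, hθy⟩ := hnear θ hθ
  have hyΘ : y ∈ Θ := hDΘ (htD hyt)
  have h₁ := hf.dist_le_mul θ hθ y hyΘ
  have h₂ := hFn.dist_le_mul y hyΘ θ hθ
  rw [dist_comm y] at h₂
  have h₃ : (C : ℝ) * dist θ y ≤ C * (2 * δ) := by gcongr
  linarith [dist_triangle4 (f θ) (f y) (F n y) (F n θ), dist_comm (f y) (F n y), hclose_n y hyt]

theorem TendstoUniformlyOn.of_dist_le {E β ι : Type*} [PseudoMetricSpace β] {l : Filter ι}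
    {s : Set E} {F G : ι → E → β} {f : E → β} {e : ι → ℝ} (hG : TendstoUniformlyOn G f l s)
    (he : Tendsto e l (𝓝 0)) (hFG : ∀ᶠ n in l, ∀ x ∈ s, dist (F n x) (G n x) ≤ e n) :
    TendstoUniformlyOn F f l s := by
  rw [Metric.tendstoUniformlyOn_iff] at hG ⊢
  intro ε hε
  filter_upwards [hG (ε / 2) (half_pos hε), he.eventually_lt_const (half_pos hε), hFG]
    with n hGn hen hFGn x hx
  linarith [dist_triangle (f x) (G n x) (F n x), dist_comm (G n x) (F n x), hGn x hx, hFGn x hx]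

section Summability

variable {ι κ : Type*} {q : ι → ℝ}

theorem summable_mul_abs_mul_of_summable_sq (hq : ∀ i, 0 ≤ q i) {a b : ι → ℝ}
    (ha : Summable fun i => q i * a i ^ 2) (hb : Summable fun i => q i * b i ^ 2) :
    Summable fun i => q i * |a i * b i| :=
  (ha.add hb).of_nonneg_of_le (fun i => mul_nonneg (hq i) (abs_nonneg _)) fun i => by
    have hab : |a i * b i| ≤ a i ^ 2 + b i ^ 2 := by
      rw [abs_mul]
      nlinarith [two_mul_le_add_sq |a i| |b i|, sq_abs (a i), sq_abs (b i), abs_nonneg (a i),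
        abs_nonneg (b i)]
    nlinarith [mul_le_mul_of_nonneg_left hab (hq i)]

theorem summable_mul_sq_sum_of_card_eq (hq : ∀ i, 0 ≤ q i) {M : ι → Finset κ} {m : ℕ}
    (hM : ∀ i, (M i).card = m) {h : ι → κ → ℝ}
    (hh : Summable fun i => q i * ∑ j ∈ M i, h i j ^ 2) :
    Summable fun i => q i * (∑ j ∈ M i, h i j) ^ 2 :=
  (hh.mul_left (m : ℝ)).of_nonneg_of_le (fun i => mul_nonneg (hq i) (sq_nonneg _)) fun i => by
    have hcs := sq_sum_le_card_mul_sum_sq (s := M i) (f := h i)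
    rw [hM] at hcs
    nlinarith [mul_le_mul_of_nonneg_left hcs (hq i)]

theorem summable_mul_sq_sum_add_abs (hq : ∀ i, 0 ≤ q i) {M : ι → Finset κ} {m : ℕ}
    (hM : ∀ i, (M i).card = m) {k : ι → ℝ} {g : ι → κ → ℝ}
    (hk : Summable fun i => q i * k i ^ 2) (hg : Summable fun i => q i * ∑ j ∈ M i, g i j ^ 2) :
    Summable fun i => q i * (∑ j ∈ M i, (k i + |g i j|)) ^ 2 := by
  refine summable_mul_sq_sum_of_card_eq hq hM <|
    ((hk.mul_left (2 * (m : ℝ))).add (hg.mul_left 2)).of_nonneg_of_le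
      (fun i => mul_nonneg (hq i) (Finset.sum_nonneg fun j _ => sq_nonneg _)) fun i => ?_
  have hsq : ∑ j ∈ M i, (k i + |g i j|) ^ 2 ≤ 2 * m * k i ^ 2 + 2 * ∑ j ∈ M i, g i j ^ 2 := by
    calc ∑ j ∈ M i, (k i + |g i j|) ^ 2 ≤ ∑ j ∈ M i, (2 * k i ^ 2 + 2 * g i j ^ 2) :=
          Finset.sum_le_sum fun j _ => by nlinarith [sq_abs (g i j), sq_nonneg (k i - |g i j|)]
      _ = 2 * m * k i ^ 2 + 2 * ∑ j ∈ M i, g i j ^ 2 := by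
          rw [Finset.sum_add_distrib, Finset.sum_const, hM, ← Finset.mul_sum, nsmul_eq_mul]
          ring
  nlinarith [mul_le_mul_of_nonneg_left hsq (hq i)]

theorem rpow_le_mul_exp {t s c : ℝ} (ht : 0 ≤ t) (hs : 0 < s) (hc : 0 < c) :
    t ^ s ≤ (s / c) ^ s * Real.exp (c * t) := by
  have hy : 0 ≤ c * t / s := by positivity
  calc t ^ s = (s / c * (c * t / s)) ^ s := by congr 1; field_simp
    _ = (s / c) ^ s * (c * t / s) ^ s := Real.mul_rpow (by positivity) hy
    _ ≤ (s / c) ^ s * Real.exp (c * t / s) ^ s := by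
        gcongr; linarith [Real.add_one_le_exp (c * t / s)]
    _ = (s / c) ^ s * Real.exp (c * t) := by rw [← Real.exp_mul, div_mul_cancel₀ _ hs.ne']

theorem summable_mul_one_add_rpow_sq (hq : ∀ i, 0 ≤ q i) {r : ι → ℝ} (hr : ∀ i, 0 ≤ r i)
    {c γ : ℝ} (hc : 0 < c) (hγ : 0 < γ) (hexp : Summable fun i => q i * Real.exp (c * r i)) :
    Summable fun i => q i * (1 + r i ^ γ) ^ 2 := by
  set A := (γ / (c / 2)) ^ γ
  refine (hexp.mul_left (2 + 2 * A ^ 2)).of_nonneg_of_le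
    (fun i => mul_nonneg (hq i) (sq_nonneg _)) fun i => ?_
  have h1 : r i ^ γ ≤ A * Real.exp (c / 2 * r i) := rpow_le_mul_exp (hr i) hγ (half_pos hc)
  have h2 : Real.exp (c / 2 * r i) ^ 2 = Real.exp (c * r i) := by
    rw [← Real.exp_nat_mul]; ring_nf
  have h3 : 1 ≤ Real.exp (c * r i) := Real.one_le_exp (mul_nonneg hc.le (hr i))
  have h0 : 0 ≤ r i ^ γ := Real.rpow_nonneg (hr i) γ
  have hbound : (1 + r i ^ γ) ^ 2 ≤ (2 + 2 * A ^ 2) * Real.exp (c * r i) := by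
    calc (1 + r i ^ γ) ^ 2 ≤ 2 + 2 * (r i ^ γ) ^ 2 := by nlinarith [sq_nonneg (1 - r i ^ γ)]
      _ ≤ 2 * Real.exp (c * r i) + 2 * (A * Real.exp (c / 2 * r i)) ^ 2 := by
          gcongr; linarith
      _ = (2 + 2 * A ^ 2) * Real.exp (c * r i) := by rw [mul_pow, h2]; ring
  nlinarith [mul_le_mul_of_nonneg_left hbound (hq i)]

theorem abs_tsum_mul_sub_tsum_mul_le (hq : ∀ i, 0 ≤ q i) {u v w : ι → ℝ}
    (hu : Summable fun i => q i * u i) (hv : Summable fun i => q i * v i)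
    (hw : Summable fun i => q i * w i) (h : ∀ i, 0 < q i → |u i - v i| ≤ w i) :
    |∑' i, q i * u i - ∑' i, q i * v i| ≤ ∑' i, q i * w i := by
  rw [← hu.tsum_sub hv, ← Real.norm_eq_abs]
  refine (norm_tsum_le_tsum_norm (hu.sub hv).norm).trans
    ((hu.sub hv).norm.tsum_le_tsum (fun i => ?_) hw)
  rcases (hq i).eq_or_lt with h0 | h0
  · simp [← h0]
  · rw [← mul_sub, norm_mul, Real.norm_of_nonneg (hq i), Real.norm_eq_abs]
    exact mul_le_mul_of_nonneg_left (h i h0) (hq i)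

end Summability

structure IsIIDSample {Ω 𝒳 : Type*} [MeasurableSpace Ω] [MeasurableSpace 𝒳]
    (μ : Measure Ω) (X : ℕ → Ω → 𝒳) (q : 𝒳 → ℝ) : Prop where
  measurable : ∀ i, Measurable (X i)
  measure_preimage_singleton : ∀ i x, μ (X i ⁻¹' {x}) = ENNReal.ofReal (q x)
  indep : iIndepFun X μ

namespace IsIIDSample

variable {𝒳 Ω : Type*} [MeasurableSpace 𝒳] [MeasurableSpace Ω] {μ : Measure Ω}
  {X : ℕ → Ω → 𝒳} {q : 𝒳 → ℝ}

theorem ae_pos [Countable 𝒳] (hX : IsIIDSample μ X q) (hq : ∀ x, 0 ≤ q x) :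
    ∀ᵐ ω ∂μ, ∀ i, 0 < q (X i ω) := by
  rw [ae_all_iff]
  intro i
  rw [ae_iff]
  refine (measure_preimage_eq_zero_iff_of_countable (s := {x | ¬ 0 < q x})
    (Set.to_countable _)).2 fun x hx => ?_
  rw [hX.measure_preimage_singleton, le_antisymm (not_lt.1 hx) (hq x), ENNReal.ofReal_zero]

variable [MeasurableSingletonClass 𝒳]

theorem map_singleton (hX : IsIIDSample μ X q) (i : ℕ) (x : 𝒳) :
    μ.map (X i) {x} = ENNReal.ofReal (q x) := by
  rw [Measure.map_apply (hX.measurable i) (measurableSet_singleton x),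
    hX.measure_preimage_singleton]

variable [Countable 𝒳]

theorem integrable_map (hX : IsIIDSample μ X q) (hq : ∀ x, 0 ≤ q x) {φ : 𝒳 → ℝ}
    (hφ : Summable fun x => q x * |φ x|) : Integrable φ (μ.map (X 0)) := by
  refine ⟨(measurable_of_countable φ).aestronglyMeasurable, ?_⟩
  change ∫⁻ x, ‖φ x‖ₑ ∂(μ.map (X 0)) < ⊤
  have hterm : ∀ x, ‖φ x‖ₑ * μ.map (X 0) {x} = ENNReal.ofReal (q x * |φ x|) := fun x => by
    rw [hX.map_singleton, Real.enorm_eq_ofReal_abs, ← ENNReal.ofReal_mul (abs_nonneg _),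
      mul_comm]
  rw [lintegral_countable', tsum_congr hterm,
    ← ENNReal.ofReal_tsum_of_nonneg (fun x => mul_nonneg (hq x) (abs_nonneg _)) hφ]
  exact ENNReal.ofReal_lt_top

theorem ae_tendsto_sampleMean (hX : IsIIDSample μ X q) (hq : ∀ x, 0 ≤ q x) {φ : 𝒳 → ℝ}
    (hφ : Summable fun x => q x * |φ x|) :
    ∀ᵐ ω ∂μ, Tendsto (sampleMean fun i => φ (X i ω)) atTop (𝓝 (∑' x, q x * φ x)) := by
  have hφm : Measurable φ := measurable_of_countable φ
  have hident : ∀ i, IdentDistrib (X i) (X 0) μ μ := fun i =>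
    ⟨(hX.measurable i).aemeasurable, (hX.measurable 0).aemeasurable,
      Measure.ext_of_singleton fun x => by rw [hX.map_singleton, hX.map_singleton]⟩
  have hmean : ∫ ω, φ (X 0 ω) ∂μ = ∑' x, q x * φ x := by
    rw [← integral_map (hX.measurable 0).aemeasurable hφm.aestronglyMeasurable,
      integral_countable (hX.integrable_map hq hφ)]
    exact tsum_congr fun x => by
      rw [measureReal_def, hX.map_singleton, smul_eq_mul, ENNReal.toReal_ofReal (hq x)]
  have hslln := strong_law_ae_real (fun i ω => φ (X i ω))
    ((integrable_map_measure hφm.aestronglyMeasurable (hX.measurable 0).aemeasurable).1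
      (hX.integrable_map hq hφ))
    (fun i j hij => (hX.indep.indepFun hij).comp hφm hφm) fun i => (hident i).comp hφm
  rwa [hmean] at hslln

theorem ae_tendsto_smoothedFrequency [DecidableEq 𝒳] (hX : IsIIDSample μ X q)
    (hq : ∀ x, 0 ≤ q x) (a : 𝒳 → ℝ) (b : ℝ) :
    ∀ᵐ ω ∂μ, ∀ x, Tendsto (fun n : ℕ =>
      ((∑ i ∈ Finset.range n, if X i ω = x then (1 : ℝ) else 0) + a x) / (n + b))
      atTop (𝓝 (q x)) := by
  rw [ae_all_iff]
  intro x
  have hφ : Summable fun y => q y * |if y = x then (1 : ℝ) else 0| :=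
    summable_of_ne_finset_zero (s := {x}) fun y hy => by
      simp [Finset.mem_singleton.not.1 hy]
  filter_upwards [hX.ae_tendsto_sampleMean hq hφ] with ω hω
  have hmean : ∑' y, q y * (if y = x then (1 : ℝ) else 0) = q x := by simp
  rw [hmean] at hω
  exact tendsto_add_div_add_of_tendsto_div (a x) b hω

theorem ae_exists_finset_sampleMean_ite_lt [DecidableEq 𝒳] (hX : IsIIDSample μ X q)
    (hq : ∀ x, 0 ≤ q x) {ψ : 𝒳 → ℝ} (hψ0 : ∀ x, 0 ≤ ψ x) (hψ : Summable fun x => q x * ψ x) :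
    ∀ᵐ ω ∂μ, ∀ ε > 0, ∃ F : Finset 𝒳, ∀ᶠ n in atTop,
      sampleMean (fun i => if X i ω ∈ F then 0 else ψ (X i ω)) n < ε := by
  have hlim : ∀ᵐ ω ∂μ, ∀ F : Finset 𝒳,
      Tendsto (sampleMean fun i => if X i ω ∈ F then 0 else ψ (X i ω)) atTop
        (𝓝 (∑' x, q x * if x ∈ F then 0 else ψ x)) := by
    rw [ae_all_iff]
    intro F
    refine hX.ae_tendsto_sampleMean hq (hψ.of_nonneg_of_le
      (fun x => mul_nonneg (hq x) (abs_nonneg _)) fun x => ?_)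
    split_ifs <;> simp [abs_of_nonneg (hψ0 x), mul_nonneg (hq x) (hψ0 x)]
  have hsmall : Tendsto (fun F : Finset 𝒳 => ∑' x, q x * if x ∈ F then 0 else ψ x) atTop
      (𝓝 0) := by
    refine (tendsto_tsum_compl_atTop_zero fun x => q x * ψ x).congr fun F => ?_
    refine (tsum_subtype {x | x ∉ F} fun x => q x * ψ x).trans (tsum_congr fun x => ?_)
    by_cases hx : x ∈ F <;> simp [Set.indicator, hx]
  filter_upwards [hlim] with ω hω ε hε
  obtain ⟨F, hF⟩ := (hsmall.eventually_lt_const hε).exists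
  exact ⟨F, (hω F).eventually_lt_const hF⟩

theorem ae_tendstoUniformlyOn_sampleMean (hX : IsIIDSample μ X q) (hq : ∀ x, 0 ≤ q x)
    {E : Type*} [PseudoMetricSpace E] {Θ : Set E} (hΘ : TotallyBounded Θ) {f : E → 𝒳 → ℝ}
    {L : 𝒳 → ℝ} (hf : ∀ θ ∈ Θ, Summable fun x => q x * |f θ x|)
    (hL : Summable fun x => q x * |L x|)
    (hfL : ∀ x, 0 < q x → ∀ θ ∈ Θ, ∀ θ' ∈ Θ, |f θ x - f θ' x| ≤ L x * dist θ θ') :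
    ∀ᵐ ω ∂μ, TendstoUniformlyOn (fun n θ => sampleMean (fun i => f θ (X i ω)) n)
      (fun θ => ∑' x, q x * f θ x) atTop Θ := by
  obtain ⟨D, hDΘ, hDc, hD⟩ := hΘ.isSeparable.exists_countable_dense_subset
  set T := ∑' x, q x * |L x|
  have hsum : ∀ θ ∈ Θ, Summable fun x => q x * f θ x := fun θ hθ =>
    (hf θ hθ).of_norm_bounded fun x => by
      rw [norm_mul, Real.norm_of_nonneg (hq x), Real.norm_eq_abs]
  have hfL' : ∀ x, 0 < q x → ∀ θ ∈ Θ, ∀ θ' ∈ Θ, |f θ x - f θ' x| ≤ |L x| * dist θ θ' :=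
    fun x hx θ hθ θ' hθ' => (hfL x hx θ hθ θ' hθ').trans
      (mul_le_mul_of_nonneg_right (le_abs_self _) dist_nonneg)
  have hT : T ≤ ((T + 1).toNNReal : ℝ) := (lt_add_one T).le.trans (Real.le_coe_toNNReal _)
  have hlim_lip : LipschitzOnWith (T + 1).toNNReal (fun θ => ∑' x, q x * f θ x) Θ :=
    LipschitzOnWith.of_dist_le_mul fun θ hθ θ' hθ' => by
      rw [Real.dist_eq]
      calc _ ≤ ∑' x, q x * (|L x| * dist θ θ') :=
            abs_tsum_mul_sub_tsum_mul_le hq (hsum θ hθ) (hsum θ' hθ')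
              ((hL.mul_right (dist θ θ')).congr fun x => by ring)
              fun x hx => hfL' x hx θ hθ θ' hθ'
        _ = T * dist θ θ' := by rw [← tsum_mul_right]; exact tsum_congr fun x => by ring
        _ ≤ _ := by gcongr
  filter_upwards [hX.ae_pos hq, hX.ae_tendsto_sampleMean hq (φ := fun x => |L x|)
      (by simpa only [abs_abs] using hL),
    (ae_ball_iff hDc).2 fun θ hθ => hX.ae_tendsto_sampleMean hq (hf θ (hDΘ hθ))]
    with ω hpos hLω hfω
  refine tendstoUniformlyOn_of_lipschitzOnWith_of_tendsto_dense hΘ hDΘ hD ?_ hlim_lip hfω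
  filter_upwards [hLω.eventually_le_const (lt_add_one T)] with n hn
  refine LipschitzOnWith.of_dist_le_mul fun θ hθ θ' hθ' => ?_
  calc _ ≤ sampleMean (fun i => |L (X i ω)| * dist θ θ') n :=
        dist_sampleMean_le fun i => hfL' _ (hpos i) θ hθ θ' hθ'
    _ = sampleMean (fun i => |L (X i ω)|) n * dist θ θ' := sampleMean_mul_right _
    _ ≤ _ := by gcongr; exact hn.trans (Real.le_coe_toNNReal _)

end IsIIDSample

section LRM

variable {𝒳 : Type*}

def logRatio (p : 𝒳 → ℝ) (x x' : 𝒳) : ℝ := Real.log (p x' / p x)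

/-- The average over `x' ∈ M x` in the LRM loss, with model log-ratios `ℓ` and data log-ratios
`g` in place of `log (p_θ(x')/p_θ(x))` and `log (q(x')/q(x))`. -/
def lrmTerm (M : 𝒳 → Finset 𝒳) (ℓ g : 𝒳 → 𝒳 → ℝ) (x : 𝒳) : ℝ :=
  1 / ((M x).card : ℝ) * ∑ x' ∈ M x, (ℓ x x' ^ 2 - 2 * ℓ x x' * g x x')

def logRatioDist (M : 𝒳 → Finset 𝒳) (p q : 𝒳 → ℝ) (x : 𝒳) : ℝ :=
  ∑ x' ∈ M x, |logRatio p x x' - logRatio q x x'|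

variable {M : 𝒳 → Finset 𝒳} {x : 𝒳}

theorem abs_one_div_card_mul_sum_le {ι : Type*} (s : Finset ι) (h : ι → ℝ) :
    |1 / (s.card : ℝ) * ∑ i ∈ s, h i| ≤ ∑ i ∈ s, |h i| := by
  rw [abs_mul, abs_of_nonneg (by positivity)]
  calc 1 / (s.card : ℝ) * |∑ i ∈ s, h i| ≤ 1 * ∑ i ∈ s, |h i| :=
        mul_le_mul (by rw [one_div]; exact Nat.cast_inv_le_one _)
          (Finset.abs_sum_le_sum_abs _ _) (abs_nonneg _) zero_le_one
    _ = ∑ i ∈ s, |h i| := one_mul _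

theorem abs_lrmTerm_sub_lrmTerm_right_le {ℓ g g' : 𝒳 → 𝒳 → ℝ} {k : ℝ}
    (hℓ : ∀ x' ∈ M x, |ℓ x x'| ≤ k) :
    |lrmTerm M ℓ g x - lrmTerm M ℓ g' x| ≤ 2 * k * ∑ x' ∈ M x, |g x x' - g' x x'| := by
  rw [lrmTerm, lrmTerm, ← mul_sub, ← Finset.sum_sub_distrib]
  refine (abs_one_div_card_mul_sum_le _ _).trans ?_
  rw [Finset.mul_sum]
  refine Finset.sum_le_sum fun x' hx' => ?_
  rw [show ℓ x x' ^ 2 - 2 * ℓ x x' * g x x' - (ℓ x x' ^ 2 - 2 * ℓ x x' * g' x x')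
      = -(2 * ℓ x x' * (g x x' - g' x x')) by ring, abs_neg, abs_mul, abs_mul, abs_two]
  gcongr
  exact hℓ x' hx'

theorem abs_lrmTerm_sub_lrmTerm_left_le {ℓ ℓ' g : 𝒳 → 𝒳 → ℝ} {k δ : ℝ}
    (hℓ : ∀ x' ∈ M x, |ℓ x x'| ≤ k) (hℓ' : ∀ x' ∈ M x, |ℓ' x x'| ≤ k)
    (hδ : ∀ x' ∈ M x, |ℓ x x' - ℓ' x x'| ≤ δ) :
    |lrmTerm M ℓ g x - lrmTerm M ℓ' g x| ≤ 2 * δ * ∑ x' ∈ M x, (k + |g x x'|) := by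
  rw [lrmTerm, lrmTerm, ← mul_sub, ← Finset.sum_sub_distrib]
  refine (abs_one_div_card_mul_sum_le _ _).trans ?_
  rw [Finset.mul_sum]
  refine Finset.sum_le_sum fun x' hx' => ?_
  rw [show ℓ x x' ^ 2 - 2 * ℓ x x' * g x x' - (ℓ' x x' ^ 2 - 2 * ℓ' x x' * g x x')
      = (ℓ x x' - ℓ' x x') * (ℓ x x' + ℓ' x x' - 2 * g x x') by ring, abs_mul]
  have hsum : |ℓ x x' + ℓ' x x' - 2 * g x x'| ≤ 2 * (k + |g x x'|) := by
    have := abs_sub (ℓ x x' + ℓ' x x') (2 * g x x')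
    have := abs_add_le (ℓ x x') (ℓ' x x')
    rw [abs_mul, abs_two] at *
    linarith [hℓ x' hx', hℓ' x' hx']
  calc |ℓ x x' - ℓ' x x'| * |ℓ x x' + ℓ' x x' - 2 * g x x'| ≤ δ * (2 * (k + |g x x'|)) :=
        mul_le_mul (hδ x' hx') hsum (abs_nonneg _) ((abs_nonneg _).trans (hδ x' hx'))
    _ = 2 * δ * (k + |g x x'|) := by ring

theorem abs_lrmTerm_le {ℓ g : 𝒳 → 𝒳 → ℝ} {k : ℝ} (hℓ : ∀ x' ∈ M x, |ℓ x x'| ≤ k) :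
    |lrmTerm M ℓ g x| ≤ 2 * k * ∑ x' ∈ M x, (k + |g x x'|) := by
  simpa [lrmTerm] using abs_lrmTerm_sub_lrmTerm_left_le (ℓ' := 0) (g := g) hℓ
    (fun x' hx' => by simpa using (abs_nonneg _).trans (hℓ x' hx')) (by simpa using hℓ)

theorem logRatioDist_nonneg (p q : 𝒳 → ℝ) : 0 ≤ logRatioDist M p q x :=
  Finset.sum_nonneg fun _ _ => abs_nonneg _

theorem logRatioDist_le {p q : 𝒳 → ℝ} {a b : ℝ} (hp : ∀ x' ∈ M x, |logRatio p x x'| ≤ a)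
    (hq : ∀ x' ∈ M x, |logRatio q x x'| ≤ b) : logRatioDist M p q x ≤ (M x).card * (a + b) := by
  calc logRatioDist M p q x ≤ ∑ _x' ∈ M x, (a + b) :=
        Finset.sum_le_sum fun x' hx' => (abs_sub _ _).trans (add_le_add (hp x' hx') (hq x' hx'))
    _ = (M x).card * (a + b) := by rw [Finset.sum_const, nsmul_eq_mul]

theorem tendsto_logRatioDist {ι : Type*} {l : Filter ι} {p : ι → 𝒳 → ℝ} {q : 𝒳 → ℝ}
    (hp : ∀ y, Tendsto (fun n => p n y) l (𝓝 (q y))) (hx : 0 < q x)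
    (hM : ∀ x' ∈ M x, 0 < q x') : Tendsto (fun n => logRatioDist M (p n) q x) l (𝓝 0) := by
  have hterm : ∀ x' ∈ M x,
      Tendsto (fun n => |logRatio (p n) x x' - logRatio q x x'|) l (𝓝 0) := fun x' hx' => by
    have hlog : Tendsto (fun n => logRatio (p n) x x') l (𝓝 (logRatio q x x')) :=
      (Real.continuousAt_log (div_pos (hM x' hx') hx).ne').tendsto.comp
        ((hp x').div (hp x) hx.ne')
    simpa using (hlog.sub_const (logRatio q x x')).abs
  simpa [logRatioDist] using tendsto_finsetSum (M x) hterm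

theorem abs_logRatio_sub_le {E : Type*} [NormedAddCommGroup E] [NormedSpace ℝ E] {Θ : Set E}
    (hΘo : IsOpen Θ) (hΘc : Convex ℝ Θ) {p : E → 𝒳 → ℝ} {x' : 𝒳}
    (hpx : DifferentiableOn ℝ (fun θ => p θ x) Θ) (hpx' : DifferentiableOn ℝ (fun θ => p θ x') Θ)
    (hpos : ∀ θ ∈ Θ, 0 < p θ x) (hpos' : ∀ θ ∈ Θ, 0 < p θ x') {C : ℝ}
    (hC : ∀ θ ∈ Θ, ‖iteratedFDerivWithin ℝ 1 (fun t => logRatio (p t) x x') Θ θ‖ ≤ C)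
    {θ θ' : E} (hθ : θ ∈ Θ) (hθ' : θ' ∈ Θ) :
    |logRatio (p θ) x x' - logRatio (p θ') x x'| ≤ C * dist θ θ' := by
  have hdiff : DifferentiableOn ℝ (fun t => logRatio (p t) x x') Θ :=
    ((hpx'.log fun t ht => (hpos' t ht).ne').sub (hpx.log fun t ht => (hpos t ht).ne')).congr
      fun t ht => Real.log_div (hpos' t ht).ne' (hpos t ht).ne'
  have hderiv : ∀ t ∈ Θ, ‖fderivWithin ℝ (fun t => logRatio (p t) x x') Θ t‖ ≤ C := fun t ht => by
    rw [← norm_iteratedFDerivWithin_one _ (hΘo.uniqueDiffWithinAt ht)]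
    exact hC t ht
  simpa [dist_eq_norm, Real.norm_eq_abs] using
    hΘc.norm_image_sub_le_of_norm_fderivWithin_le hdiff hderiv hθ' hθ

theorem dist_sampleMean_lrmTerm_le {ℓ : 𝒳 → 𝒳 → ℝ} {p q k : 𝒳 → ℝ} {a : ℕ → 𝒳} {n : ℕ}
    (hℓ : ∀ i, ∀ x' ∈ M (a i), |ℓ (a i) x'| ≤ k (a i)) :
    dist (sampleMean (fun i => lrmTerm M ℓ (logRatio p) (a i)) n)
      (sampleMean (fun i => lrmTerm M ℓ (logRatio q) (a i)) n) ≤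
      2 * sampleMean (fun i => |k (a i)| * logRatioDist M p q (a i)) n := by
  rw [← sampleMean_mul_left]
  refine dist_sampleMean_le fun i => (abs_lrmTerm_sub_lrmTerm_right_le (hℓ i)).trans ?_
  rw [← mul_assoc]
  exact mul_le_mul_of_nonneg_right (by gcongr; exact le_abs_self _) (logRatioDist_nonneg _ _)

end LRM

section Estimation

variable {𝒳 Ω : Type*} [Countable 𝒳] [MeasurableSpace 𝒳] [MeasurableSpace Ω] {μ : Measure Ω}
  {X : ℕ → Ω → 𝒳} {q : 𝒳 → ℝ} {M : 𝒳 → Finset 𝒳}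

theorem IsIIDSample.ae_tendstoUniformlyOn_oracleLoss [MeasurableSingletonClass 𝒳]
    (hX : IsIIDSample μ X q) (hq : ∀ x, 0 ≤ q x) {m : ℕ} (hM : ∀ x, (M x).card = m)
    (hMq : ∀ x, ∀ x' ∈ M x, 0 < q x')
    (hq_adm : Summable fun x => q x * ∑ x' ∈ M x, logRatio q x x' ^ 2)
    {E : Type*} [NormedAddCommGroup E] [NormedSpace ℝ E] {Θ : Set E} (hΘo : IsOpen Θ)
    (hΘc : Convex ℝ Θ) (hΘb : TotallyBounded Θ) {p : E → 𝒳 → ℝ}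
    (hp : ∀ x, DifferentiableOn ℝ (fun θ => p θ x) Θ) (hp_pos : ∀ θ ∈ Θ, ∀ x, 0 < q x → 0 < p θ x)
    {k₀ k₁ : 𝒳 → ℝ} (hk₀ : Summable fun x => q x * k₀ x ^ 2)
    (hk₁ : Summable fun x => q x * k₁ x ^ 2)
    (hℓ₀ : ∀ x, ∀ x' ∈ M x, ∀ θ ∈ Θ, |logRatio (p θ) x x'| ≤ k₀ x)
    (hℓ₁ : ∀ x, ∀ x' ∈ M x, ∀ θ ∈ Θ,
      ‖iteratedFDerivWithin ℝ 1 (fun t => logRatio (p t) x x') Θ θ‖ ≤ k₁ x) :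
    ∀ᵐ ω ∂μ, TendstoUniformlyOn
      (fun n θ => sampleMean (fun i => lrmTerm M (logRatio (p θ)) (logRatio q) (X i ω)) n)
      (fun θ => ∑' x, q x * lrmTerm M (logRatio (p θ)) (logRatio q) x) atTop Θ := by
  set S : 𝒳 → ℝ := fun x => ∑ x' ∈ M x, (k₀ x + |logRatio q x x'|)
  have hS : Summable fun x => q x * S x ^ 2 := summable_mul_sq_sum_add_abs hq hM hk₀ hq_adm
  refine hX.ae_tendstoUniformlyOn_sampleMean hq hΘb (L := fun x => 2 * k₁ x * S x)
    (fun θ hθ => ?_) ?_ fun x hx θ hθ θ' hθ' => ?_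
  · refine ((summable_mul_abs_mul_of_summable_sq hq hk₀ hS).mul_left 2).of_nonneg_of_le
      (fun x => mul_nonneg (hq x) (abs_nonneg _)) fun x => ?_
    have hf := abs_lrmTerm_le (g := logRatio q) fun x' hx' => hℓ₀ x x' hx' θ hθ
    have hkS : 2 * k₀ x * S x ≤ 2 * |k₀ x * S x| := by
      rw [mul_assoc]; exact mul_le_mul_of_nonneg_left (le_abs_self _) zero_le_two
    nlinarith [mul_le_mul_of_nonneg_left (hf.trans hkS) (hq x)]
  · refine ((summable_mul_abs_mul_of_summable_sq hq hk₁ hS).mul_left 2).congr fun x => ?_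
    simp only [abs_mul, abs_two]
    ring
  · calc _ ≤ 2 * (k₁ x * dist θ θ') * S x :=
          abs_lrmTerm_sub_lrmTerm_left_le (fun x' hx' => hℓ₀ x x' hx' θ hθ)
            (fun x' hx' => hℓ₀ x x' hx' θ' hθ') fun x' hx' =>
              abs_logRatio_sub_le hΘo hΘc (hp x) (hp x') (fun t ht => hp_pos t ht x hx)
                (fun t ht => hp_pos t ht x' (hMq x x' hx')) (hℓ₁ x x' hx') hθ hθ'
      _ = 2 * k₁ x * S x * dist θ θ' := by ring

theorem IsIIDSample.ae_tendsto_sampleMean_estimationError [DecidableEq 𝒳]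
    (hX : IsIIDSample μ X q) (hq : ∀ x, 0 ≤ q x) (hMq : ∀ x, ∀ x' ∈ M x, 0 < q x')
    {k : 𝒳 → ℝ} {qhat : ℕ → Ω → 𝒳 → ℝ}
    (hlim : ∀ᵐ ω ∂μ, ∀ x, Tendsto (fun n => qhat n ω x) atTop (𝓝 (q x)))
    (htail : ∀ᵐ ω ∂μ, ∀ ε > 0, ∃ F : Finset 𝒳, ∀ᶠ n in atTop, sampleMean
      (fun i => if X i ω ∈ F then 0 else |k (X i ω)| * logRatioDist M (qhat n ω) q (X i ω)) n < ε) :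
    ∀ᵐ ω ∂μ, Tendsto
      (fun n => sampleMean (fun i => |k (X i ω)| * logRatioDist M (qhat n ω) q (X i ω)) n)
      atTop (𝓝 0) := by
  filter_upwards [hX.ae_pos hq, hlim, htail] with ω hpos hlimω htailω
  refine tendsto_sampleMean_zero_of_tail (v := fun n x => |k x| * logRatioDist M (qhat n ω) q x)
    (fun n x => mul_nonneg (abs_nonneg _) (logRatioDist_nonneg _ _)) (fun i => ?_) htailω
  simpa using (tendsto_logRatioDist hlimω (hpos i) (hMq _)).const_mul |k (X i ω)|

theorem IsIIDSample.ae_exists_finset_estimationError_lt [MeasurableSingletonClass 𝒳] [DecidableEq 𝒳]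
    (hX : IsIIDSample μ X q) (hq : ∀ x, 0 ≤ q x) {m : ℕ} (hM : ∀ x, (M x).card = m)
    {k r : 𝒳 → ℝ} (hk : Summable fun x => q x * k x ^ 2) (hr : ∀ x, 0 ≤ r x) {c γ : ℝ}
    (hc : 0 < c) (hγ : 0 < γ) (hexp : Summable fun x => q x * Real.exp (c * r x)) {Kq : ℝ}
    (hqb : ∀ x, ∀ x' ∈ M x, |logRatio q x x'| ≤ Kq * (1 + r x ^ γ))
    {qhat : ℕ → Ω → 𝒳 → ℝ} {Khat : ℕ → ℝ} (hKhat : IsBoundedUnder (· ≤ ·) atTop Khat)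
    (hqhatb : ∀ n ω x, ∀ x' ∈ M x, |logRatio (qhat n ω) x x'| ≤ Khat n * (1 + r x ^ γ)) :
    ∀ᵐ ω ∂μ, ∀ ε > 0, ∃ F : Finset 𝒳, ∀ᶠ n in atTop, sampleMean
      (fun i => if X i ω ∈ F then 0 else |k (X i ω)| * logRatioDist M (qhat n ω) q (X i ω)) n
        < ε := by
  obtain ⟨Kb, hKb⟩ := hKhat
  have hr' : ∀ x, 0 ≤ r x ^ γ := fun x => Real.rpow_nonneg (hr x) γ
  set ψ : 𝒳 → ℝ := fun x => m * |k x| * (1 + r x ^ γ)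
  have hψ0 : ∀ x, 0 ≤ ψ x := fun x => by have := hr' x; positivity
  have hψ : Summable fun x => q x * ψ x := by
    refine ((summable_mul_abs_mul_of_summable_sq hq hk
      (summable_mul_one_add_rpow_sq hq hr hc hγ hexp)).mul_left (m : ℝ)).congr fun x => ?_
    rw [abs_mul, abs_of_nonneg (by linarith [hr' x] : 0 ≤ 1 + r x ^ γ)]
    ring
  filter_upwards [hX.ae_exists_finset_sampleMean_ite_lt hq hψ0 hψ] with ω hω
  refine exists_finset_sampleMean_ite_lt_of_le (a := fun i => X i ω)
    (v := fun n x => |k x| * logRatioDist M (qhat n ω) q x) (C := Kb + Kq) hψ0 ?_ hω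
  filter_upwards [eventually_map.1 hKb] with n hn x
  have hdist : logRatioDist M (qhat n ω) q x ≤ m * ((Khat n + Kq) * (1 + r x ^ γ)) := by
    calc logRatioDist M (qhat n ω) q x
        ≤ (M x).card * (Khat n * (1 + r x ^ γ) + Kq * (1 + r x ^ γ)) :=
          logRatioDist_le (hqhatb n ω x) (hqb x)
      _ = m * ((Khat n + Kq) * (1 + r x ^ γ)) := by rw [hM]; ring
  have := hr' x
  calc |k x| * logRatioDist M (qhat n ω) q x ≤ |k x| * (m * ((Kb + Kq) * (1 + r x ^ γ))) := by
        gcongr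
        exact hdist.trans (by gcongr)
    _ = (Kb + Kq) * ψ x := by ring

end Estimation

theorem lrm_loss_uniform_convergence_general
    {𝒳 : Type*} [Countable 𝒳] [DecidableEq 𝒳] [MeasurableSpace 𝒳] [MeasurableSingletonClass 𝒳]
    {Ω : Type*} [MeasurableSpace Ω] (μ : Measure Ω)
    {d : ℕ} (Θ : Set (Fin d → ℝ))
    -- q0 is a PMF on 𝒳
    (q0 : 𝒳 → ℝ) (hq0_nonneg : ∀ x, 0 ≤ q0 x)
    -- matching set with M(x) ⊆ supp(q0) and |M(x)| = m < ∞
    (M : 𝒳 → Finset 𝒳) (m : ℕ) (hM_card : ∀ x, (M x).card = m)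
    (hM_supp : ∀ x, ∀ x' ∈ M x, 0 < q0 x')
    -- Standing Assumption (a): q0 ∈ Q^adm_{q0}(𝒳)
    (hq0_adm : Summable fun x => q0 x * ∑ x' ∈ M x, (Real.log (q0 x' / q0 x)) ^ 2)
    -- the model family
    (pθ : (Fin d → ℝ) → 𝒳 → ℝ)
    -- Standing Assumption (b): every p_θ, θ ∈ Θ, lies in Q^adm_{q0}(𝒳)
    (hpθ_pos : ∀ θ ∈ Θ, ∀ x, 0 < q0 x → 0 < pθ θ x)
    -- i.i.d. observations from q0
    (X : ℕ → Ω → 𝒳)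
    (hX_meas : ∀ i, Measurable (X i))
    (hX_dist : ∀ i x, μ (X i ⁻¹' {x}) = ENNReal.ofReal (q0 x))
    (hX_indep : iIndepFun X μ)
    -- the Laplace-smoothed estimator q̂_α with α > 0
    (α : ℝ)
    (qdag : 𝒳 → ℝ)
    (Zdag : ℝ)
    (qhat : ℕ → Ω → 𝒳 → ℝ)
    (hqhat : ∀ n ω x, qhat n ω x =
      ((∑ i ∈ Finset.range n, if X i ω = x then (1 : ℝ) else 0) + α * qdag x)
        / ((n : ℝ) + α * Zdag))
    -- Assumption A2: either 𝒳 is finite, or 𝒳 is countably infinite, q0 is subexponential,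
    -- and the log-ratios of q0 and q̂_α grow at most polynomially
    (nrmX : 𝒳 → ℝ) (hnrmX : ∀ x, 0 ≤ nrmX x)
    (hA2 : Finite 𝒳 ∨
      (Infinite 𝒳 ∧ (∃ c > (0 : ℝ), Summable fun x => q0 x * Real.exp (c * nrmX x)) ∧
        ∃ Kq0 > (0 : ℝ), ∃ γ > (1 : ℝ), ∃ Khat : ℕ → ℝ,
          (∀ n, 0 ≤ Khat n) ∧ IsBoundedUnder (· ≤ ·) atTop Khat ∧
          (∀ x, ∀ x' ∈ M x, |Real.log (q0 x' / q0 x)| ≤ Kq0 * (1 + nrmX x ^ γ)) ∧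
          (∀ n ω x, ∀ x' ∈ M x,
            |Real.log (qhat n ω x' / qhat n ω x)| ≤ Khat n * (1 + nrmX x ^ γ))))
    -- the population and empirical LRM losses
    (Lpop : (Fin d → ℝ) → ℝ)
    (hLpop : ∀ θ, Lpop θ = ∑' x, q0 x * ((1 / ((M x).card : ℝ)) *
      ∑ x' ∈ M x, ((Real.log (pθ θ x' / pθ θ x)) ^ 2
        - 2 * Real.log (pθ θ x' / pθ θ x) * Real.log (q0 x' / q0 x))))
    (Lhat : ℕ → Ω → (Fin d → ℝ) → ℝ)
    (hLhat : ∀ n ω θ, Lhat n ω θ = (1 / (n : ℝ)) * ∑ i ∈ Finset.range n,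
      ((1 / ((M (X i ω)).card : ℝ)) * ∑ x' ∈ M (X i ω),
        ((Real.log (pθ θ x' / pθ θ (X i ω))) ^ 2
          - 2 * Real.log (pθ θ x' / pθ θ (X i ω))
              * Real.log (qhat n ω x' / qhat n ω (X i ω)))))
    -- Assumption A3: Θ is open, convex and bounded, and empirical minimisers
    -- eventually exist almost surely
    (hΘ_open : IsOpen Θ) (hΘ_convex : Convex ℝ Θ) (hΘ_bounded : Bornology.IsBounded Θ)
    -- Assumption A4 with r = 0: smoothness of the model and an L²(q0) envelope for the
    -- log-ratios (derivatives of order 0 and 1)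
    (hA4_smooth : ∀ x, ContDiffOn ℝ 3 (fun θ => pθ θ x) Θ)
    (K : ℕ → 𝒳 → ℝ)
    (hK_L2 : ∀ ρ ≤ 1, Summable fun x => q0 x * (K ρ x) ^ 2)
    (hA4_bound : ∀ ρ ≤ 1, ∀ x, ∀ x' ∈ M x, ∀ θ ∈ Θ,
      ‖iteratedFDerivWithin ℝ ρ (fun t => Real.log (pθ t x' / pθ t x)) Θ θ‖ ≤ K ρ x) :
    -- conclusion: almost-sure uniform convergence of the empirical loss over Θ
    ∀ᵐ ω ∂μ, ∀ ε > (0 : ℝ), ∃ N : ℕ, ∀ n ≥ N, ∀ θ ∈ Θ, |Lhat n ω θ - Lpop θ| ≤ ε := by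
  have hX : IsIIDSample μ X q0 := ⟨hX_meas, hX_dist, hX_indep⟩
  have hqhat_lim : ∀ᵐ ω ∂μ, ∀ x, Tendsto (fun n => qhat n ω x) atTop (𝓝 (q0 x)) := by
    filter_upwards [hX.ae_tendsto_smoothedFrequency hq0_nonneg (fun x => α * qdag x) (α * Zdag)]
      with ω hω x
    simpa only [hqhat] using hω x
  have hℓ₀ : ∀ x, ∀ x' ∈ M x, ∀ θ ∈ Θ, |logRatio (pθ θ) x x'| ≤ K 0 x := fun x x' hx' θ hθ => by
    have h := hA4_bound 0 (Nat.zero_le 1) x x' hx' θ hθ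
    rwa [norm_iteratedFDerivWithin_zero, Real.norm_eq_abs] at h
  have htail : ∀ᵐ ω ∂μ, ∀ ε > 0, ∃ F : Finset 𝒳, ∀ᶠ n in atTop, sampleMean (fun i =>
      if X i ω ∈ F then 0 else |K 0 (X i ω)| * logRatioDist M (qhat n ω) q0 (X i ω)) n < ε := by
    rcases hA2 with hfin | ⟨-, ⟨c, hc, hexp⟩, Kq0, -, γ, hγ, Khat, -, hKhat, hq0b, hqhatb⟩
    · exact ae_of_all _ fun ω => exists_finset_sampleMean_ite_lt_of_finite (fun i => X i ω)
        fun n x => |K 0 x| * logRatioDist M (qhat n ω) q0 x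
    · exact hX.ae_exists_finset_estimationError_lt hq0_nonneg hM_card (hK_L2 0 (Nat.zero_le 1))
        hnrmX hc (by linarith) hexp hq0b hKhat hqhatb
  filter_upwards [hX.ae_tendsto_sampleMean_estimationError hq0_nonneg hM_supp hqhat_lim htail,
    hX.ae_tendstoUniformlyOn_oracleLoss hq0_nonneg hM_card hM_supp hq0_adm hΘ_open hΘ_convex
      (hΘ_bounded.isCompact_closure.totallyBounded.subset subset_closure)
      (fun x => (hA4_smooth x).differentiableOn (by norm_num)) hpθ_pos (hK_L2 0 (Nat.zero_le 1))
      (hK_L2 1 le_rfl) hℓ₀ (hA4_bound 1 le_rfl)] with ω hest horacle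
  have hunif : TendstoUniformlyOn (fun n => Lhat n ω) Lpop atTop Θ := by
    refine (horacle.of_dist_le (by simpa using hest.const_mul 2)
      (Eventually.of_forall fun n θ hθ => ?_)).congr_right fun θ _ => (hLpop θ).symm
    have hLhat_eq : Lhat n ω θ =
        sampleMean (fun i => lrmTerm M (logRatio (pθ θ)) (logRatio (qhat n ω)) (X i ω)) n := by
      rw [hLhat, one_div_mul_eq_div]; rfl
    rw [hLhat_eq]
    exact dist_sampleMean_lrmTerm_le fun i x' hx' => hℓ₀ (X i ω) x' hx' θ hθ
  intro ε hε
  obtain ⟨N, hN⟩ := eventually_atTop.1 (Metric.tendstoUniformlyOn_iff.1 hunif ε hε)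
  exact ⟨N, fun n hn θ hθ => by rw [abs_sub_comm, ← Real.dist_eq]; exact (hN n hn θ hθ).le⟩

/-- Almost-sure uniform convergence of the empirical LRM loss.
Under the standing assumptions (i.i.d. data from an admissible `q0`, admissible model
family, admissible Laplace-smoothed estimator), Assumption A2, Assumption A3 and
Assumption A4 with `r = 1`, `sup_{θ∈Θ} |L̂_n(θ) − L(θ)| → 0` almost surely. -/
theorem lrm_loss_uniform_convergence
    {𝒳 : Type*} [Countable 𝒳] [DecidableEq 𝒳] [MeasurableSpace 𝒳] [MeasurableSingletonClass 𝒳]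
    {Ω : Type*} [MeasurableSpace Ω] (μ : Measure Ω) [IsProbabilityMeasure μ]
    {d : ℕ} (Θ : Set (Fin d → ℝ))
    -- q0 is a PMF on 𝒳
    (q0 : 𝒳 → ℝ) (hq0_nonneg : ∀ x, 0 ≤ q0 x) (hq0_sum : ∑' x, q0 x = 1)
    -- matching set with M(x) ⊆ supp(q0) and |M(x)| = m < ∞
    (M : 𝒳 → Finset 𝒳) (m : ℕ) (hm : 0 < m) (hM_card : ∀ x, (M x).card = m)
    (hM_supp : ∀ x, ∀ x' ∈ M x, 0 < q0 x')
    -- Standing Assumption (a): q0 ∈ Q^adm_{q0}(𝒳)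
    (hq0_adm : Summable fun x => q0 x * ∑ x' ∈ M x, (Real.log (q0 x' / q0 x)) ^ 2)
    -- the model family
    (pθ : (Fin d → ℝ) → 𝒳 → ℝ)
    -- Standing Assumption (b): every p_θ, θ ∈ Θ, lies in Q^adm_{q0}(𝒳)
    (hpθ_pos : ∀ θ ∈ Θ, ∀ x, 0 < q0 x → 0 < pθ θ x)
    (hpθ_supp : ∀ θ ∈ Θ, ∀ x, 0 < pθ θ x → 0 < q0 x)
    (hpθ_adm : ∀ θ ∈ Θ, Summable fun x => q0 x * ∑ x' ∈ M x, (Real.log (pθ θ x' / pθ θ x)) ^ 2)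
    -- i.i.d. observations from q0
    (X : ℕ → Ω → 𝒳)
    (hX_meas : ∀ i, Measurable (X i))
    (hX_dist : ∀ i x, μ (X i ⁻¹' {x}) = ENNReal.ofReal (q0 x))
    (hX_indep : iIndepFun X μ)
    -- the Laplace-smoothed estimator q̂_α with α > 0
    (α : ℝ) (hα : 0 < α)
    (qdag : 𝒳 → ℝ) (hqdag_nonneg : ∀ x, 0 ≤ qdag x) (hqdag_pos : ∀ x, 0 < q0 x → 0 < qdag x)
    (Zdag : ℝ) (hZdag : HasSum qdag Zdag)
    (qhat : ℕ → Ω → 𝒳 → ℝ)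
    (hqhat : ∀ n ω x, qhat n ω x =
      ((∑ i ∈ Finset.range n, if X i ω = x then (1 : ℝ) else 0) + α * qdag x)
        / ((n : ℝ) + α * Zdag))
    -- Standing Assumption (c): q̂_α ∈ Q^adm_{q0}(𝒳) almost surely
    (hqhat_adm : ∀ n, ∀ᵐ ω ∂μ,
      Summable fun x => q0 x * ∑ x' ∈ M x, (Real.log (qhat n ω x' / qhat n ω x)) ^ 2)
    -- Assumption A2: either 𝒳 is finite, or 𝒳 is countably infinite, q0 is subexponential,
    -- and the log-ratios of q0 and q̂_α grow at most polynomially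
    (nrmX : 𝒳 → ℝ) (hnrmX : ∀ x, 0 ≤ nrmX x)
    (hA2 : Finite 𝒳 ∨
      (Infinite 𝒳 ∧ (∃ c > (0 : ℝ), Summable fun x => q0 x * Real.exp (c * nrmX x)) ∧
        ∃ Kq0 > (0 : ℝ), ∃ γ > (1 : ℝ), ∃ Khat : ℕ → ℝ,
          (∀ n, 0 ≤ Khat n) ∧ IsBoundedUnder (· ≤ ·) atTop Khat ∧
          (∀ x, ∀ x' ∈ M x, |Real.log (q0 x' / q0 x)| ≤ Kq0 * (1 + nrmX x ^ γ)) ∧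
          (∀ n ω x, ∀ x' ∈ M x,
            |Real.log (qhat n ω x' / qhat n ω x)| ≤ Khat n * (1 + nrmX x ^ γ))))
    -- the population and empirical LRM losses
    (Lpop : (Fin d → ℝ) → ℝ)
    (hLpop : ∀ θ, Lpop θ = ∑' x, q0 x * ((1 / ((M x).card : ℝ)) *
      ∑ x' ∈ M x, ((Real.log (pθ θ x' / pθ θ x)) ^ 2
        - 2 * Real.log (pθ θ x' / pθ θ x) * Real.log (q0 x' / q0 x))))
    (Lhat : ℕ → Ω → (Fin d → ℝ) → ℝ)
    (hLhat : ∀ n ω θ, Lhat n ω θ = (1 / (n : ℝ)) * ∑ i ∈ Finset.range n,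
      ((1 / ((M (X i ω)).card : ℝ)) * ∑ x' ∈ M (X i ω),
        ((Real.log (pθ θ x' / pθ θ (X i ω))) ^ 2
          - 2 * Real.log (pθ θ x' / pθ θ (X i ω))
              * Real.log (qhat n ω x' / qhat n ω (X i ω)))))
    -- Assumption A3: Θ is open, convex and bounded, and empirical minimisers
    -- eventually exist almost surely
    (hΘ_open : IsOpen Θ) (hΘ_convex : Convex ℝ Θ) (hΘ_bounded : Bornology.IsBounded Θ)
    (hA3_min : ∀ᵐ ω ∂μ, ∀ᶠ n in atTop, ∃ θ ∈ Θ, IsMinOn (Lhat n ω) Θ θ)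
    -- Assumption A4 with r = 0: smoothness of the model and an L²(q0) envelope for the
    -- log-ratios (derivatives of order 0 and 1)
    (hA4_smooth : ∀ x, ContDiffOn ℝ 3 (fun θ => pθ θ x) Θ)
    (K : ℕ → 𝒳 → ℝ)
    (hK_L2 : ∀ ρ ≤ 1, Summable fun x => q0 x * (K ρ x) ^ 2)
    (hA4_bound : ∀ ρ ≤ 1, ∀ x, ∀ x' ∈ M x, ∀ θ ∈ Θ,
      ‖iteratedFDerivWithin ℝ ρ (fun t => Real.log (pθ t x' / pθ t x)) Θ θ‖ ≤ K ρ x) :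
    -- conclusion: almost-sure uniform convergence of the empirical loss over Θ
    ∀ᵐ ω ∂μ, ∀ ε > (0 : ℝ), ∃ N : ℕ, ∀ n ≥ N, ∀ θ ∈ Θ, |Lhat n ω θ - Lpop θ| ≤ ε :=
  lrm_loss_uniform_convergence_general μ Θ q0 hq0_nonneg M m hM_card hM_supp hq0_adm pθ hpθ_pos X
    hX_meas hX_dist hX_indep α qdag Zdag qhat hqhat nrmX hnrmX hA2 Lpop hLpop Lhat hLhat hΘ_open
    hΘ_convex hΘ_bounded hA4_smooth K hK_L2 hA4_bound
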